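/- Non-collapsibility: there exists a trivariate centered Gaussian distribution with X1 ⊥ X3 | X2 (i.e. ρ_{13|2} = 0) for which I_{12} ≠ I_{12|3}; equivalently, conditional independence of X1 and X3 given X2 does not force δ123 = 0. Concretely, for a positive definite correlation matrix with ρ13 = ρ12 ρ23 and ρ12, ρ23 ≠ 0, δ123 = (1/2) log[(1-ρ_{12|3}²)/(1-ρ12²)] ≠ 0. -/

import Mathlib

open Real

noncomputable def corrMat (ρ12 ρ13 ρ23 : ℝ) : Matrix (Fin 3) (Fin 3) ℝ :=
  !![1, ρ12, ρ13; ρ12, 1, ρ23; ρ13, ρ23, 1]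

noncomputable def gaussEnt (ρ12 ρ13 ρ23 : ℝ) (A : Finset (Fin 3)) : ℝ :=
  (1 / 2) * Real.log
    (((corrMat ρ12 ρ13 ρ23).submatrix
        (fun i : A => (i : Fin 3)) (fun j : A => (j : Fin 3))).det)

noncomputable def delta123 (ρ12 ρ13 ρ23 : ℝ) : ℝ :=
  gaussEnt ρ12 ρ13 ρ23 {0, 1, 2}
    - gaussEnt ρ12 ρ13 ρ23 {0, 1} - gaussEnt ρ12 ρ13 ρ23 {0, 2}
    - gaussEnt ρ12 ρ13 ρ23 {1, 2}
    + gaussEnt ρ12 ρ13 ρ23 {0} + gaussEnt ρ12 ρ13 ρ23 {1}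
    + gaussEnt ρ12 ρ13 ρ23 {2}

noncomputable def partialCorr (ρ12 ρ13 ρ23 : ℝ) : ℝ :=
  (ρ12 - ρ13 * ρ23) / Real.sqrt ((1 - ρ13 ^ 2) * (1 - ρ23 ^ 2))

/-!
The interaction information `δ₁₂₃` is an alternating sum of log principal minors of the
correlation matrix. Since `1 - ρ₁₂|₃² = det / ((1 - ρ₁₃²)(1 - ρ₂₃²))`, this sum equals
`½ log ((1 - ρ₁₂|₃²) / (1 - ρ₁₂²))` for every positive definite correlation matrix. Under
`ρ₁₃ = ρ₁₂ ρ₂₃` the determinant factors as `(1 - ρ₁₂²)(1 - ρ₂₃²)`, leaving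
`δ₁₂₃ = -½ log (1 - ρ₁₃²)`, which is positive because `0 < ρ₁₃² < 1`.
-/

namespace Matrix

variable {m n R : Type*} [Fintype m] [DecidableEq m] [DecidableEq n] [CommRing R]

theorem det_submatrix_finset_of_injective (M : Matrix n n R) {s : Finset n} {f : m → n}
    (hf : Function.Injective f) (hs : Finset.univ.image f = s) :
    (M.submatrix ((↑) : s → n) (↑)).det = (M.submatrix f f).det := by
  let e : m ≃ s :=
    Equiv.ofBijective (fun i => ⟨f i, hs ▸ Finset.mem_image_of_mem f (Finset.mem_univ i)⟩)
      ⟨fun i j hij => hf (congrArg Subtype.val hij), fun ⟨x, hx⟩ => by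
        obtain ⟨i, -, rfl⟩ := Finset.mem_image.mp (hs ▸ hx); exact ⟨i, rfl⟩⟩
  rw [← det_submatrix_equiv_self e]
  rfl

theorem det_submatrix_pair (M : Matrix n n R) {i j : n} (hij : i ≠ j) :
    (M.submatrix ((↑) : ({i, j} : Finset n) → n) (↑)).det = M i i * M j j - M i j * M j i := by
  rw [det_submatrix_finset_of_injective M (f := ![i, j]) ?_ ?_, det_fin_two]
  · rfl
  · intro a b hab; fin_cases a <;> fin_cases b <;> simp_all [eq_comm]
  · ext x; simp [Fin.exists_fin_two, eq_comm]

theorem det_submatrix_univ [Fintype n] (M : Matrix n n R) :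
    (M.submatrix ((↑) : ↥(Finset.univ : Finset n) → n) (↑)).det = M.det :=
  det_submatrix_finset_of_injective M Function.injective_id (by simp)

end Matrix

theorem corrMat_det (a b c : ℝ) :
    (corrMat a b c).det = 1 - a ^ 2 - b ^ 2 - c ^ 2 + 2 * a * b * c := by
  rw [Matrix.det_fin_three]
  simp only [corrMat, Matrix.of_apply, Matrix.cons_val', Matrix.cons_val_zero,
    Matrix.cons_val_fin_one, Matrix.cons_val_one, Matrix.cons_val]
  ring

theorem corrMat_det_submatrix_pair (a b c : ℝ) {i j : Fin 3} (hij : i ≠ j) :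
    ((corrMat a b c).submatrix ((↑) : ({i, j} : Finset (Fin 3)) → Fin 3) (↑)).det
      = 1 - corrMat a b c i j ^ 2 := by
  rw [Matrix.det_submatrix_pair _ hij]
  fin_cases i <;> fin_cases j <;> simp_all [corrMat, sq]

theorem corrMat_det_submatrix_univ (a b c : ℝ) :
    ((corrMat a b c).submatrix ((↑) : ({0, 1, 2} : Finset (Fin 3)) → Fin 3) (↑)).det
      = 1 - a ^ 2 - b ^ 2 - c ^ 2 + 2 * a * b * c := by
  rw [← corrMat_det, ← Matrix.det_submatrix_univ]
  rfl

theorem delta123_eq (a b c : ℝ) :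
    delta123 a b c = 1 / 2 * (log (1 - a ^ 2 - b ^ 2 - c ^ 2 + 2 * a * b * c)
      - log (1 - a ^ 2) - log (1 - b ^ 2) - log (1 - c ^ 2)) := by
  simp only [delta123, gaussEnt, corrMat_det_submatrix_univ,
    corrMat_det_submatrix_pair a b c (by decide : (0 : Fin 3) ≠ 1),
    corrMat_det_submatrix_pair a b c (by decide : (0 : Fin 3) ≠ 2),
    corrMat_det_submatrix_pair a b c (by decide : (1 : Fin 3) ≠ 2), Matrix.det_unique]
  simp only [Matrix.submatrix_apply, Finset.default_singleton, corrMat, Matrix.of_apply, Matrix.cons_val',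
    Matrix.cons_val_zero, Matrix.cons_val_one, Matrix.cons_val_fin_one, Matrix.cons_val, log_one]
  ring

theorem corrMat_minors_pos {a b c : ℝ} (hpd : (corrMat a b c).PosDef) :
    0 < 1 - a ^ 2 ∧ 0 < 1 - b ^ 2 ∧ 0 < 1 - c ^ 2
      ∧ 0 < 1 - a ^ 2 - b ^ 2 - c ^ 2 + 2 * a * b * c := by
  have minor_pos (s : Finset (Fin 3)) :
      0 < ((corrMat a b c).submatrix ((↑) : s → Fin 3) (↑)).det :=
    (hpd.submatrix Subtype.val_injective).det_pos
  refine ⟨?_, ?_, ?_, corrMat_det_submatrix_univ a b c ▸ minor_pos _⟩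
  · exact corrMat_det_submatrix_pair a b c (i := 0) (j := 1) (by decide) ▸ minor_pos _
  · exact corrMat_det_submatrix_pair a b c (i := 0) (j := 2) (by decide) ▸ minor_pos _
  · exact corrMat_det_submatrix_pair a b c (i := 1) (j := 2) (by decide) ▸ minor_pos _

theorem one_sub_partialCorr_sq {a b c : ℝ} (hb : 0 < 1 - b ^ 2) (hc : 0 < 1 - c ^ 2) :
    1 - partialCorr a b c ^ 2
      = (1 - a ^ 2 - b ^ 2 - c ^ 2 + 2 * a * b * c) / ((1 - b ^ 2) * (1 - c ^ 2)) := by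
  rw [partialCorr, div_pow, sq_sqrt (by positivity)]
  field_simp
  ring

theorem delta123_eq_log_partialCorr {a b c : ℝ} (hpd : (corrMat a b c).PosDef) :
    delta123 a b c = 1 / 2 * log ((1 - partialCorr a b c ^ 2) / (1 - a ^ 2)) := by
  obtain ⟨ha, hb, hc, hD⟩ := corrMat_minors_pos hpd
  rw [delta123_eq, one_sub_partialCorr_sq hb hc, div_div, log_div hD.ne' (by positivity),
    log_mul (by positivity) ha.ne', log_mul hb.ne' hc.ne']
  ring

theorem delta123_of_condIndep {a b c : ℝ} (hpd : (corrMat a b c).PosDef) (hci : b = a * c) :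
    delta123 a b c = -(1 / 2 * log (1 - b ^ 2)) := by
  obtain ⟨ha, hb, hc, -⟩ := corrMat_minors_pos hpd
  have hD : 1 - a ^ 2 - b ^ 2 - c ^ 2 + 2 * a * b * c = (1 - a ^ 2) * (1 - c ^ 2) := by
    rw [hci]; ring
  rw [delta123_eq, hD, log_mul ha.ne' hc.ne']
  ring

theorem stmt_18 (ρ12 ρ13 ρ23 : ℝ) (hpd : (corrMat ρ12 ρ13 ρ23).PosDef)
    (hci : ρ13 = ρ12 * ρ23) (h12 : ρ12 ≠ 0) (h23 : ρ23 ≠ 0) :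
    delta123 ρ12 ρ13 ρ23
        = (1 / 2) * Real.log ((1 - (partialCorr ρ12 ρ13 ρ23) ^ 2) / (1 - ρ12 ^ 2))
      ∧ delta123 ρ12 ρ13 ρ23 ≠ 0 := by
  refine ⟨delta123_eq_log_partialCorr hpd, ne_of_gt ?_⟩
  obtain ⟨-, h13, -, -⟩ := corrMat_minors_pos hpd
  have h13_sq_pos : 0 < ρ13 ^ 2 := by rw [hci]; positivity
  have hlog : log (1 - ρ13 ^ 2) < 0 := log_neg h13 (by linarith)
  rw [delta123_of_condIndep hpd hci]
  linarith
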